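/- Let a = 8/27 and C = 9. Then the quartic q(r) = −16C² + 64r + 32Cr − 16r² − 8aCr² + 8ar³ − a²r⁴ has r = 9 as its only real root, and it has multiplicity 2; in particular q(r) ≤ 0 for all real r, with equality only at r = 9. -/

import Mathlib

def q (a C r : ℝ) : ℝ :=
  -16 * C^2 + 64 * r + 32 * C * r - 16 * r^2 - 8 * a * C * r^2 + 8 * a * r^3 - a^2 * r^4

theorem q_special_eq (r : ℝ) :
    q (8/27) 9 r = -((r - 9)^2 * (64 * (r - 9/2)^2 + 10368)) / 729 := by
  unfold q
  ring

theorem q_special_nonpos (r : ℝ) : q (8/27) 9 r ≤ 0 := by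
  rw [q_special_eq]
  have : 0 ≤ (r - 9)^2 * (64 * (r - 9/2)^2 + 10368) := by positivity
  linarith

theorem q_special_eq_zero_iff {r : ℝ} : q (8/27) 9 r = 0 ↔ r = 9 := by
  have hpos : 0 < 64 * (r - 9/2)^2 + 10368 := by positivity
  rw [q_special_eq, div_eq_zero_iff, neg_eq_zero, mul_eq_zero, pow_eq_zero_iff two_ne_zero,
    sub_eq_zero]
  norm_num [hpos.ne']

theorem q_nonpositive_special :
    q (8/27) 9 9 = 0 ∧ deriv (q (8/27) 9) 9 = 0 ∧
    (∀ r : ℝ, q (8/27) 9 r ≤ 0) ∧ (∀ r : ℝ, q (8/27) 9 r = 0 → r = 9) := by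
  have hroot : q (8/27) 9 9 = 0 := q_special_eq_zero_iff.mpr rfl
  have hmax : IsLocalMax (q (8/27) 9) 9 :=
    Filter.Eventually.of_forall fun r => hroot ▸ q_special_nonpos r
  exact ⟨hroot, hmax.deriv_eq_zero, q_special_nonpos, fun _ => q_special_eq_zero_iff.mp⟩
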